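/- arXiv:2209.08166 — 5 statements merged into one kernel-verified Lean document; each statement's English description precedes it below -/
import Mathlib

section
/- Let n, d be positive integers with d dividing n, let q ∈ (0,1), and let a : {0,…,n/d−1}×{0,…,d−1} → ℝ be a labeling of the (n,d)-spider. Let b denote the (random) trace of a under the deletion channel with deletion probability q. Then for all complex numbers w₁, w₂, the expected value of the generating function of the trace satisfies E[ Σ_{(i',j')} b_{i',j'} · w₁^{i'} · w₂^{j'} ] = (1−q) · Σ_{(i,j)} a_{i,j} · (q^d + (1−q^d)·w₁)^i · (q + (1−q)·w₂)^j, where both sums range over all pairs (i,j) with 0 ≤ i < n/d and 0 ≤ j < d. -/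
/-!
A surviving node `(i, j)` lands in the trace at position `(i', j')`, where `i'` counts the
surviving legs before leg `i` and `j'` the surviving nodes before `j` in leg `i`. So the
generating function of the trace is a sum over surviving nodes of `a i j * w₁ ^ i' * w₂ ^ j'`,
and by linearity it suffices to average this monomial for one node. That weight is a product
over legs of functions of each leg's deletion pattern, so by independence its mean factors:
each earlier leg survives with probability `1 - q ^ d` and contributes `q ^ d + (1 - q ^ d) w₁`,
each earlier node of leg `i` contributes `q + (1 - q) w₂`, and node `(i, j)` itself survives
with probability `1 - q`.
-/

/-- The list of legs of an `(m·d, d)`-spider that survive the deletion pattern `δ`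
(`δ p = true` means node `p` is deleted), in their original left-to-right order.
A leg survives iff at least one of its `d` nodes survives. -/
def survivingLegs (m d : ℕ) (δ : Fin m × Fin d → Bool) : List (Fin m) :=
  (List.finRange m).filter fun i => (List.finRange d).any fun j => ! δ (i, j)

/-- The list of nodes of leg `i` that survive the deletion pattern `δ`,
in their original top-to-bottom order. -/
def survivingNodes (m d : ℕ) (δ : Fin m × Fin d → Bool) (i : Fin m) : List (Fin d) :=
  (List.finRange d).filter fun j => ! δ (i, j)

/-- The (zero-padded) trace of the real-labeled spider `a` under deletion pattern `δ`:
position `(i', j')` of the trace holds the label of the `j'`-th surviving node of the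
`i'`-th surviving leg when such a node exists, and `0` otherwise. -/
def spiderTrace {m d : ℕ} (a : Fin m × Fin d → ℝ) (δ : Fin m × Fin d → Bool) :
    Fin m × Fin d → ℝ := fun p =>
  ((survivingLegs m d δ)[(p.1 : ℕ)]?).elim 0 fun i =>
    ((survivingNodes m d δ i)[(p.2 : ℕ)]?).elim 0 fun j => a (i, j)

open Finset

theorem sum_range_getElem?_elim_of_pairwise_lt {α M : Type*} [LinearOrder α]
    [AddCommMonoid M] {l : List α} (hl : l.Pairwise (· < ·)) (F : α → ℕ → M) {k : ℕ}
    (hk : l.length ≤ k) :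
    ∑ t ∈ Finset.range k, (l[t]?).elim 0 (F · t) = ∑ x ∈ l.toFinset, F x (l.countP (· < x)) := by
  induction l generalizing F k with
  | nil => simp
  | cons h tl ih =>
    obtain ⟨k, rfl⟩ : ∃ k', k = k' + 1 := Nat.exists_eq_succ_of_ne_zero (by simp at hk; omega)
    rw [List.pairwise_cons] at hl
    have h_notMem : h ∉ tl.toFinset := fun hh => lt_irrefl h (hl.1 h (List.mem_toFinset.1 hh))
    rw [sum_range_succ', List.toFinset_cons, sum_insert h_notMem, add_comm]
    simp only [List.getElem?_cons_succ, List.getElem?_cons_zero, Option.elim_some]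
    rw [ih hl.2 (fun x t => F x (t + 1)) (by simpa using hk)]
    congr 1
    · rw [List.countP_cons_of_neg (by simp),
        List.countP_eq_zero.2 fun y hy => by simpa using (hl.1 y hy).le]
    · refine sum_congr rfl fun x hx => ?_
      rw [List.countP_cons_of_pos (by simpa using hl.1 x (List.mem_toFinset.1 hx))]

theorem sum_getElem?_filter_finRange_mul_pow {R : Type*} [Semiring R] {k : ℕ}
    (P : Fin k → Bool) (f : Fin k → R) (w : R) :
    ∑ t : Fin k, (((List.finRange k).filter P)[(t : ℕ)]?).elim 0 f * w ^ (t : ℕ) =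
      ∑ x with P x, f x * w ^ #{y | y < x ∧ P y} := by
  have h_elim (o : Option (Fin k)) (t : ℕ) : o.elim 0 f * w ^ t = o.elim 0 (f · * w ^ t) := by
    cases o <;> simp
  simp only [h_elim]
  rw [Fin.sum_univ_eq_sum_range (fun t => (((List.finRange k).filter P)[t]?).elim 0 (f · * w ^ t)),
    sum_range_getElem?_elim_of_pairwise_lt ((List.pairwise_lt_finRange k).filter P) _
      ((List.length_filter_le _ _).trans_eq (List.length_finRange ..))]
  simp only [List.toFinset_filter, List.toFinset_finRange]
  refine sum_congr rfl fun x _ => congrArg _ (congrArg _ ?_)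
  rw [List.countP_filter, List.countP_eq_length_filter, ← List.toFinset_card_of_nodup
    ((List.nodup_finRange k).filter _), List.toFinset_filter, List.toFinset_finRange]
  simp

theorem prod_ite_lt_ite_eq {ι M : Type*} [Fintype ι] [LinearOrder ι] [CommMonoid M] (i : ι)
    (f g : ι → M) :
    ∏ y, (if y < i then f y else if y = i then g y else 1) = (∏ y with y < i, f y) * g i := by
  have h_split (y : ι) : (if y < i then f y else if y = i then g y else 1) =
      (if y < i then f y else 1) * (if y = i then g y else 1) := by
    rcases lt_trichotomy y i with h | rfl | h
    · simp [h, h.ne]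
    · simp
    · simp [h.not_gt, h.ne']
  simp only [h_split, prod_mul_distrib, prod_filter, prod_ite_eq', mem_univ, if_true]

theorem prod_filter_lt_ite_eq_pow {ι M : Type*} [Fintype ι] [LinearOrder ι] [CommMonoid M]
    (i : ι) (P : ι → Prop) [DecidablePred P] (w : M) :
    ∏ y with y < i, (if P y then w else 1) = w ^ #{y | y < i ∧ P y} := by
  rw [← prod_filter, filter_filter, prod_const]

theorem Fin.card_filter_lt {k : ℕ} (i : Fin k) : #{y | y < i} = i := by
  rw [filter_gt_eq_Iio, Fin.card_Iio]

section DeletionExpectation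

variable {R : Type*} [CommRing R] (q : R)

def deletionExpectation {ι : Type*} [Fintype ι] [DecidableEq ι] (f : (ι → Bool) → R) : R :=
  ∑ δ : ι → Bool, (∏ p, if δ p then q else 1 - q) * f δ

theorem deletionExpectation_prod {ι : Type*} [Fintype ι] [DecidableEq ι] (g : ι → Bool → R) :
    deletionExpectation q (fun δ => ∏ p, g p (δ p)) =
      ∏ p, (q * g p true + (1 - q) * g p false) := by
  simp only [deletionExpectation, ← prod_mul_distrib]
  rw [← Fintype.prod_sum fun p b => (if b then q else 1 - q) * g p b]
  simp only [Fintype.sum_bool, if_true, Bool.false_eq_true, if_false]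

theorem deletionExpectation_one {ι : Type*} [Fintype ι] [DecidableEq ι] :
    deletionExpectation q (fun _ : ι → Bool => 1) = 1 := by
  simpa using deletionExpectation_prod q fun (_ : ι) (_ : Bool) => (1 : R)

theorem deletionExpectation_const_add_mul {ι : Type*} [Fintype ι] [DecidableEq ι] (c c' : R)
    (f : (ι → Bool) → R) :
    deletionExpectation q (fun δ => c + c' * f δ) = c + c' * deletionExpectation q f := by
  have h_one := deletionExpectation_one q (ι := ι)
  simp only [deletionExpectation, mul_one] at h_one ⊢
  simp only [mul_add, sum_add_distrib, ← sum_mul, h_one, mul_sum]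
  congr 1
  · ring
  · exact sum_congr rfl fun _ _ => by ring

theorem deletionExpectation_prod_legs {κ ι : Type*} [Fintype κ] [DecidableEq κ] [Fintype ι]
    [DecidableEq ι] (H : κ → (ι → Bool) → R) :
    deletionExpectation q (fun δ : κ × ι → Bool => ∏ y, H y fun z => δ (y, z)) =
      ∏ y, deletionExpectation q (H y) := by
  simp only [deletionExpectation]
  rw [Fintype.prod_sum fun y v => (∏ z, if v z then q else 1 - q) * H y v]
  rw [← (Equiv.curry κ ι Bool).sum_comp]
  refine sum_congr rfl fun δ _ => ?_
  rw [Fintype.prod_prod_type, ← prod_mul_distrib]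
  rfl

theorem deletionExpectation_leg_survives {ι : Type*} [Fintype ι] [DecidableEq ι] (w : R) :
    deletionExpectation q (fun v : ι → Bool => if ∃ z, v z = false then w else 1) =
      q ^ Fintype.card ι + (1 - q ^ Fintype.card ι) * w := by
  have h_indicator (v : ι → Bool) : (if ∃ z, v z = false then w else 1) =
      w + (1 - w) * ∏ z, (if v z then 1 else 0) := by
    by_cases h : ∃ z, v z = false
    · obtain ⟨z, hz⟩ := h
      rw [if_pos ⟨z, hz⟩, prod_eq_zero (mem_univ z) (by simp [hz])]
      ring
    · push Not at h
      simp [h]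
  simp only [h_indicator, deletionExpectation_const_add_mul,
    deletionExpectation_prod q fun _ b => if b then (1 : R) else 0]
  simp only [mul_one, mul_zero, add_zero, if_true, Bool.false_eq_true, if_false, prod_const,
    card_univ]
  ring

theorem deletionExpectation_node_survives {d : ℕ} (j : Fin d) (w : R) :
    deletionExpectation q (fun v : Fin d → Bool =>
        (if v j then 0 else 1) * w ^ #{z | z < j ∧ v z = false}) =
      (1 - q) * (q + (1 - q) * w) ^ (j : ℕ) := by
  set g : Fin d → Bool → R := fun z b =>
    if z < j then (if b = false then w else 1) else if z = j then (if b then 0 else 1) else 1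
    with hg
  have h_factor (v : Fin d → Bool) :
      (if v j then 0 else 1) * w ^ #{z | z < j ∧ v z = false} = ∏ z, g z (v z) := by
    rw [hg, prod_ite_lt_ite_eq, prod_filter_lt_ite_eq_pow, mul_comm]
  have h_mean (z : Fin d) : q * g z true + (1 - q) * g z false =
      if z < j then q + (1 - q) * w else if z = j then 1 - q else 1 := by
    simp only [hg]
    split_ifs <;> simp_all
  simp only [h_factor, deletionExpectation_prod, h_mean]
  rw [prod_ite_lt_ite_eq, prod_const, Fin.card_filter_lt, mul_comm]

theorem deletionExpectation_spider_position {m d : ℕ} (w₁ w₂ : R) (i : Fin m) (j : Fin d) :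
    deletionExpectation q (fun δ : Fin m × Fin d → Bool =>
        (if δ (i, j) then 0 else 1) * w₁ ^ #{y | y < i ∧ ∃ z, δ (y, z) = false} *
          w₂ ^ #{z | z < j ∧ δ (i, z) = false}) =
      (q ^ d + (1 - q ^ d) * w₁) ^ (i : ℕ) * ((1 - q) * (q + (1 - q) * w₂) ^ (j : ℕ)) := by
  set H : Fin m → (Fin d → Bool) → R := fun y v =>
    if y < i then (if ∃ z, v z = false then w₁ else 1)
    else if y = i then (if v j then 0 else 1) * w₂ ^ #{z | z < j ∧ v z = false} else 1 with hH
  have h_factor (δ : Fin m × Fin d → Bool) : (if δ (i, j) then 0 else 1) *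
      w₁ ^ #{y | y < i ∧ ∃ z, δ (y, z) = false} * w₂ ^ #{z | z < j ∧ δ (i, z) = false} =
        ∏ y, H y fun z => δ (y, z) := by
    rw [hH, prod_ite_lt_ite_eq, prod_filter_lt_ite_eq_pow]
    ring
  have h_mean (y : Fin m) : deletionExpectation q (H y) =
      if y < i then q ^ d + (1 - q ^ d) * w₁
      else if y = i then (1 - q) * (q + (1 - q) * w₂) ^ (j : ℕ) else 1 := by
    simp only [hH]
    split_ifs
    · have h_leg := deletionExpectation_leg_survives q (ι := Fin d) w₁
      rw [Fintype.card_fin] at h_leg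
      convert h_leg using 4
    · exact deletionExpectation_node_survives q j w₂
    · exact deletionExpectation_one q
  simp only [h_factor, deletionExpectation_prod_legs, h_mean]
  rw [prod_ite_lt_ite_eq, prod_const, Fin.card_filter_lt]

end DeletionExpectation

theorem sum_spiderTrace_mul_pow {m d : ℕ} (a : Fin m × Fin d → ℝ) (δ : Fin m × Fin d → Bool)
    (w₁ w₂ : ℂ) :
    ∑ p, (spiderTrace a δ p : ℂ) * w₁ ^ (p.1 : ℕ) * w₂ ^ (p.2 : ℕ) =
      ∑ p, (a p : ℂ) * ((if δ p then 0 else 1) *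
        w₁ ^ #{y | y < p.1 ∧ ∃ z, δ (y, z) = false} * w₂ ^ #{z | z < p.2 ∧ δ (p.1, z) = false}) := by
  set legSum : Fin m → ℂ := fun i =>
    ∑ j with δ (i, j) = false, (a (i, j) : ℂ) * w₂ ^ #{z | z < j ∧ δ (i, z) = false}
  have row_sum (i' : Fin m) : ∑ j' : Fin d,
      (spiderTrace a δ (i', j') : ℂ) * w₁ ^ (i' : ℕ) * w₂ ^ (j' : ℕ) =
        ((survivingLegs m d δ)[(i' : ℕ)]?).elim 0 legSum * w₁ ^ (i' : ℕ) := by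
    simp only [spiderTrace]
    cases (survivingLegs m d δ)[(i' : ℕ)]? with
    | none => simp
    | some i =>
      have := sum_getElem?_filter_finRange_mul_pow (fun j => !δ (i, j)) (fun j => (a (i, j) : ℂ)) w₂
      simp only [Bool.not_eq_true'] at this
      simp only [Option.elim_some, legSum, ← this, sum_mul, survivingNodes]
      refine sum_congr rfl fun j' _ => ?_
      cases ((List.finRange d).filter fun j => !δ (i, j))[(j' : ℕ)]? <;> simp [mul_right_comm]
  have surviving_leg_sum (i : Fin m) : ∑ j, (a (i, j) : ℂ) * ((if δ (i, j) then 0 else 1) *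
        w₁ ^ #{y | y < i ∧ ∃ z, δ (y, z) = false} * w₂ ^ #{z | z < j ∧ δ (i, z) = false}) =
      if ∃ z, δ (i, z) = false then legSum i * w₁ ^ #{y | y < i ∧ ∃ z, δ (y, z) = false} else 0 := by
    split_ifs with h_survives
    · rw [sum_mul, sum_filter]
      refine sum_congr rfl fun j _ => ?_
      cases δ (i, j) with
      | true => simp
      | false => rw [if_neg Bool.false_ne_true, if_pos rfl]; ring
    · push Not at h_survives
      exact sum_eq_zero fun j _ => by simp [h_survives j]
  rw [Fintype.sum_prod_type, Fintype.sum_prod_type]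
  simp only [row_sum, surviving_leg_sum]
  rw [← sum_filter]
  simpa [survivingLegs] using
    sum_getElem?_filter_finRange_mul_pow (fun i => (List.finRange d).any fun j => !δ (i, j)) legSum w₁

theorem spider_generating_function_general (n d : ℕ)
    (q : ℝ)
    (a : Fin (n / d) × Fin d → ℝ) (w₁ w₂ : ℂ) :
    ∑ δ : Fin (n / d) × Fin d → Bool,
      ((∏ p : Fin (n / d) × Fin d, (if δ p then q else 1 - q) : ℝ) : ℂ) *
        ∑ p : Fin (n / d) × Fin d,
          (spiderTrace a δ p : ℂ) * w₁ ^ (p.1 : ℕ) * w₂ ^ (p.2 : ℕ) =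
    (1 - (q : ℂ)) * ∑ p : Fin (n / d) × Fin d,
      (a p : ℂ) * ((q : ℂ) ^ d + (1 - (q : ℂ) ^ d) * w₁) ^ (p.1 : ℕ) *
        ((q : ℂ) + (1 - (q : ℂ)) * w₂) ^ (p.2 : ℕ) := by
  have h_weight (δ : Fin (n / d) × Fin d → Bool) :
      ((∏ p, (if δ p then q else 1 - q) : ℝ) : ℂ) = ∏ p, if δ p then (q : ℂ) else 1 - q := by
    simp [apply_ite]
  simp only [h_weight, sum_spiderTrace_mul_pow, mul_sum]
  rw [sum_comm]
  simp only [mul_left_comm _ (a _ : ℂ), ← mul_sum]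
  rw [mul_sum]
  refine sum_congr rfl fun p _ => ?_
  have h_position := deletionExpectation_spider_position (q : ℂ) w₁ w₂ p.1 p.2
  simp only [deletionExpectation, Prod.mk.eta] at h_position
  rw [h_position]
  ring

/-- Expected generating function of a trace of an `(n,d)`-spider through the deletion
channel with deletion probability `q`:
`E[Σ b_{i',j'} w₁^{i'} w₂^{j'}] = (1−q) Σ a_{i,j} (q^d+(1−q^d)w₁)^i (q+(1−q)w₂)^j`.
The expectation is written out explicitly as a weighted sum over all deletion patterns. -/
theorem spider_generating_function (n d : ℕ) (hn : 0 < n) (hd : 0 < d) (hdvd : d ∣ n)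
    (q : ℝ) (hq0 : 0 < q) (hq1 : q < 1)
    (a : Fin (n / d) × Fin d → ℝ) (w₁ w₂ : ℂ) :
    ∑ δ : Fin (n / d) × Fin d → Bool,
      ((∏ p : Fin (n / d) × Fin d, (if δ p then q else 1 - q) : ℝ) : ℂ) *
        ∑ p : Fin (n / d) × Fin d,
          (spiderTrace a δ p : ℂ) * w₁ ^ (p.1 : ℕ) * w₂ ^ (p.2 : ℕ) =
    (1 - (q : ℂ)) * ∑ p : Fin (n / d) × Fin d,
      (a p : ℂ) * ((q : ℂ) ^ d + (1 - (q : ℂ) ^ d) * w₁) ^ (p.1 : ℕ) *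
        ((q : ℂ) + (1 - (q : ℂ)) * w₂) ^ (p.2 : ℕ) :=
  spider_generating_function_general n d q a w₁ w₂
end

section
/- Let n, d be positive integers with d dividing n, let q ∈ (0,1), and let a : {0,…,n/d−1}×{0,…,d−1} → ℝ be a labeling of the (n,d)-spider. Let b denote the (random) trace of a under the deletion channel with deletion probability q. Then for every index (i',j') with 0 ≤ i' < n/d and 0 ≤ j' < d, E[b_{i',j'}] = (1−q) · Σ_{i ≥ i', j ≥ j'} a_{i,j} · C(i,i') · (1−q^d)^{i'} · q^{d(i−i')} · C(j,j') · (1−q)^{j'} · q^{j−j'}, where the sum ranges over all (i,j) with i' ≤ i < n/d and j' ≤ j < d, and C(·,·) denotes the binomial coefficient. -/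
open Finset

theorem List.Pairwise.getElem?_eq_some_iff {α : Type*} [LinearOrder α] {l : List α}
    (hl : l.Pairwise (· < ·)) {k : ℕ} {x : α} :
    l[k]? = some x ↔ x ∈ l ∧ (l.filter (· < x)).length = k := by
  induction l generalizing k with
  | nil => simp
  | cons a l ih =>
    obtain ⟨ha, hl⟩ := List.pairwise_cons.1 hl
    have hfilter_a : (l.filter (· < a)).length = 0 := by
      simpa using fun b hb => (ha b hb).le
    rcases k with _ | k
    · constructor
      · rintro ⟨⟩
        simpa using hfilter_a
      · rintro ⟨hx | ⟨_, hx⟩, hk⟩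
        · rfl
        · simp [ha x hx] at hk
    · rw [List.getElem?_cons_succ, ih hl]
      constructor
      · rintro ⟨hx, rfl⟩
        simp [hx, ha x hx]
      · rintro ⟨hx | ⟨_, hx⟩, hk⟩
        · simp [hfilter_a] at hk
        · simp [ha x hx] at hk
          exact ⟨hx, hk⟩

theorem List.getElem?_filter_finRange_eq_some_iff {N : ℕ} (p : Fin N → Bool) {k : ℕ}
    {x : Fin N} :
    ((List.finRange N).filter p)[k]? = some x ↔ p x ∧ #{y ∈ Iio x | p y} = k := by
  rw [((List.pairwise_lt_finRange N).filter p).getElem?_eq_some_iff, List.mem_filter,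
    ← List.toFinset_card_of_nodup (((List.nodup_finRange N).filter p).filter _),
    List.toFinset_filter, List.toFinset_filter, List.toFinset_finRange]
  simp only [List.mem_finRange, true_and]
  congr! 3
  ext y
  simp [and_comm]

theorem Finset.ite_card_filter_eq_sum_powersetCard {α R : Type*} [DecidableEq α]
    [CommSemiring R] (s : Finset α) (Q : α → Prop) [DecidablePred Q] (k : ℕ) :
    (if #{a ∈ s | Q a} = k then (1 : R) else 0) =
      ∑ T ∈ s.powersetCard k, ∏ a ∈ s, if (Q a ↔ a ∈ T) then (1 : R) else 0 := by
  have hprod : ∀ T ∈ s.powersetCard k,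
      (∏ a ∈ s, if (Q a ↔ a ∈ T) then (1 : R) else 0) =
        if {a ∈ s | Q a} = T then 1 else 0 := by
    intro T hT
    have hTs := (mem_powersetCard.1 hT).1
    rw [prod_boole]
    congr 1
    apply propext
    constructor
    · intro h
      ext a
      simp only [mem_filter]
      exact ⟨fun ⟨ha, hQ⟩ => (h a ha).1 hQ, fun ha => ⟨hTs ha, (h a (hTs ha)).2 ha⟩⟩
    · rintro rfl a ha
      simp [ha]
  rw [sum_congr rfl hprod, sum_ite_eq]
  simp [mem_powersetCard, filter_subset]

theorem Finset.prod_ite_mem_const {ι M : Type*} [DecidableEq ι] [CommMonoid M]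
    {s T : Finset ι} (hT : T ⊆ s) (a b : M) :
    ∏ i ∈ s, (if i ∈ T then a else b) = a ^ #T * b ^ (#s - #T) := by
  rw [prod_ite, filter_mem_eq_inter, inter_eq_right.2 hT, filter_notMem_eq_sdiff, prod_const,
    prod_const, card_sdiff_of_subset hT]

section
variable {ι β : Type*} [Fintype ι] [DecidableEq ι] [Fintype β]

theorem sum_pi_prod_mul_prod {R : Type*} [CommSemiring R] {W : β → R} (hW : ∑ b, W b = 1)
    (t : Finset ι) (h : ι → β → R) :
    ∑ g : ι → β, (∏ i, W (g i)) * ∏ i ∈ t, h i (g i) = ∏ i ∈ t, ∑ b, W b * h i b := by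
  have hext : ∀ g : ι → β, (∏ i, W (g i)) * ∏ i ∈ t, h i (g i) =
      ∏ i, W (g i) * if i ∈ t then h i (g i) else 1 := fun g => by
    rw [prod_mul_distrib, prod_ite_mem, univ_inter]
  calc ∑ g : ι → β, (∏ i, W (g i)) * ∏ i ∈ t, h i (g i)
      = ∏ i, ∑ b, W b * if i ∈ t then h i b else 1 := by
        simp only [hext]
        exact (Fintype.prod_sum fun i b => W b * if i ∈ t then h i b else 1).symm
    _ = ∏ i, if i ∈ t then ∑ b, W b * h i b else 1 :=
        prod_congr rfl fun i _ => by split_ifs <;> simp [hW]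
    _ = ∏ i ∈ t, ∑ b, W b * h i b := by rw [prod_ite_mem, univ_inter]

theorem sum_pi_prod_mul_ite_card_filter_mul {R : Type*} [CommRing R] {W : β → R}
    (hW : ∑ b, W b = 1) (s : Finset ι) {x : ι} (hx : x ∉ s) (A : β → Prop) [DecidablePred A]
    (B : β → R) (k : ℕ) :
    ∑ g : ι → β, (∏ i, W (g i)) * ((if #{y ∈ s | A (g y)} = k then 1 else 0) * B (g x)) =
      (#s).choose k * (∑ b with A b, W b) ^ k * (1 - ∑ b with A b, W b) ^ (#s - k) *
        ∑ b, W b * B b := by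
  have hcoord : ∀ i : ι, ∀ T : Finset ι, ∑ b, W b * (if (A b ↔ i ∈ T) then 1 else 0) =
      if i ∈ T then ∑ b with A b, W b else 1 - ∑ b with A b, W b := by
    intro i T
    have hcompl : ∑ b with ¬A b, W b = 1 - ∑ b with A b, W b := by
      rw [← hW, ← sum_filter_add_sum_filter_not univ A W]
      ring
    rw [← hcompl]
    split_ifs with hi <;> simp [hi, sum_filter]
  -- Splitting the count according to the set `T` of successes makes every term a product of
  -- functions of distinct coordinates.
  set h : Finset ι → ι → β → R := fun T i b =>
    if i = x then B b else if (A b ↔ i ∈ T) then 1 else 0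
  have hexpand : ∀ g : ι → β,
      (∏ i, W (g i)) * ((if #{y ∈ s | A (g y)} = k then 1 else 0) * B (g x)) =
        ∑ T ∈ s.powersetCard k, (∏ i, W (g i)) * ∏ i ∈ insert x s, h T i (g i) := by
    intro g
    rw [ite_card_filter_eq_sum_powersetCard, sum_mul, mul_sum]
    refine sum_congr rfl fun T _ => ?_
    rw [prod_insert hx, mul_comm (h T x (g x))]
    simp only [h, if_pos rfl]
    congr 2
    exact prod_congr rfl fun i hi => (if_neg (ne_of_mem_of_not_mem hi hx)).symm
  have hterm : ∀ T ∈ s.powersetCard k,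
      ∑ g : ι → β, (∏ i, W (g i)) * ∏ i ∈ insert x s, h T i (g i) =
        (∑ b with A b, W b) ^ k * (1 - ∑ b with A b, W b) ^ (#s - k) * ∑ b, W b * B b := by
    intro T hT
    obtain ⟨hTs, rfl⟩ := mem_powersetCard.1 hT
    rw [sum_pi_prod_mul_prod hW, prod_insert hx, ← prod_ite_mem_const hTs, mul_comm]
    simp only [h, if_pos rfl]
    congr 1
    exact prod_congr rfl fun i hi => by rw [← hcoord i T]; simp [ne_of_mem_of_not_mem hi hx]
  rw [Fintype.sum_congr _ _ hexpand, sum_comm, sum_congr rfl hterm, sum_const, card_powersetCard,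
    nsmul_eq_mul]
  ring
end

theorem Option.elim_zero_eq_sum {α M : Type*} [Fintype α] [DecidableEq α] [AddCommMonoid M]
    (o : Option α) (f : α → M) : o.elim 0 f = ∑ x, if o = some x then f x else 0 := by
  cases o <;> simp

section
variable {m d : ℕ}

def traceSource (δ : Fin m × Fin d → Bool) (p : Fin m × Fin d) : Option (Fin m × Fin d) :=
  (survivingLegs m d δ)[(p.1 : ℕ)]?.bind fun i =>
    ((survivingNodes m d δ i)[(p.2 : ℕ)]?).map (i, ·)

theorem spiderTrace_eq_elim_traceSource (a : Fin m × Fin d → ℝ) (δ : Fin m × Fin d → Bool)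
    (p : Fin m × Fin d) : spiderTrace a δ p = (traceSource δ p).elim 0 a := by
  unfold spiderTrace traceSource
  rcases (survivingLegs m d δ)[(p.1 : ℕ)]? with _ | i
  · rfl
  · simp only [Option.elim_some, Option.bind_some]
    cases (survivingNodes m d δ i)[(p.2 : ℕ)]? <;> rfl

theorem traceSource_eq_some_iff (δ : Fin m × Fin d → Bool) (i' i : Fin m) (j' j : Fin d) :
    traceSource δ (i', j') = some (i, j) ↔
      #{y ∈ Iio i | (List.finRange d).any fun l => !δ (y, l)} = i' ∧
        ((List.finRange d).filter fun l => !δ (i, l))[(j' : ℕ)]? = some j := by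
  simp only [traceSource, Option.bind_eq_some_iff, Option.map_eq_some_iff, Prod.mk.injEq]
  constructor
  · rintro ⟨_, hleg, _, hnode, rfl, rfl⟩
    exact ⟨((List.getElem?_filter_finRange_eq_some_iff _).1 hleg).2, hnode⟩
  · rintro ⟨hcount, hnode⟩
    have hsurvives : ((List.finRange d).any fun l => !δ (i, l)) = true :=
      List.any_eq_true.2
        ⟨j, List.mem_finRange j, (List.mem_filter.1 (List.mem_of_getElem? hnode)).2⟩
    exact ⟨i, (List.getElem?_filter_finRange_eq_some_iff _).2 ⟨hsurvives, hcount⟩, j, hnode,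
      rfl, rfl⟩

variable (q : ℝ)

theorem sum_bool_weight : ∑ b : Bool, (if b then q else 1 - q) = 1 := by
  simp

theorem sum_pi_prod_weight : ∑ v : Fin d → Bool, ∏ l, (if v l then q else 1 - q) = 1 := by
  rw [← Fintype.prod_sum (κ := fun _ => Bool) fun _ b => if b then q else 1 - q]
  simp

theorem sum_filter_any_prod_weight :
    ∑ v : Fin d → Bool with ((List.finRange d).any fun l => !v l) = true,
      ∏ l, (if v l then q else 1 - q) = 1 - q ^ d := by
  have hdead : ∑ v : Fin d → Bool with ¬((List.finRange d).any fun l => !v l) = true,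
      ∏ l, (if v l then q else 1 - q) = q ^ d := by
    rw [show ({v | ¬((List.finRange d).any fun l => !v l) = true} : Finset (Fin d → Bool)) =
      {fun _ => true} by ext v; simp [funext_iff]]
    simp
  have htotal := sum_filter_add_sum_filter_not univ
    (fun v : Fin d → Bool => ((List.finRange d).any fun l => !v l) = true)
    fun v => ∏ l, (if v l then q else 1 - q)
  rw [hdead, sum_pi_prod_weight] at htotal
  linarith

theorem sum_prod_weight_mul_ite_getElem?_filter (j' j : Fin d) :
    ∑ v : Fin d → Bool, (∏ l, if v l then q else 1 - q) *
        (if ((List.finRange d).filter fun l => !v l)[(j' : ℕ)]? = some j then 1 else 0) =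
      (j : ℕ).choose j' * (1 - q) ^ (j' : ℕ) * q ^ ((j : ℕ) - j') * (1 - q) := by
  have hind : ∀ v : Fin d → Bool,
      (if ((List.finRange d).filter fun l => !v l)[(j' : ℕ)]? = some j then (1 : ℝ) else 0) =
        (if #{y ∈ Iio j | (!v y) = true} = j' then 1 else 0) *
          (if (!v j) = true then 1 else 0) := by
    intro v
    simp only [List.getElem?_filter_finRange_eq_some_iff, ite_zero_mul_ite_zero, one_mul,
      and_comm]
  simp only [hind]
  rw [sum_pi_prod_mul_ite_card_filter_mul (sum_bool_weight q) (Iio j) notMem_Iio_self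
    (fun b => (!b) = true) (fun b => if (!b) = true then 1 else 0), Fin.card_Iio]
  simp [sum_filter]

theorem sum_prod_weight_mul_ite_traceSource (i' i : Fin m) (j' j : Fin d) :
    ∑ δ : Fin m × Fin d → Bool, (∏ r, if δ r then q else 1 - q) *
        (if traceSource δ (i', j') = some (i, j) then 1 else 0) =
      (i : ℕ).choose i' * (1 - q ^ d) ^ (i' : ℕ) * (q ^ d) ^ ((i : ℕ) - i') *
        ((j : ℕ).choose j' * (1 - q) ^ (j' : ℕ) * q ^ ((j : ℕ) - j') * (1 - q)) := by
  have hcurry : ∑ δ : Fin m × Fin d → Bool, (∏ r, if δ r then q else 1 - q) *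
        (if traceSource δ (i', j') = some (i, j) then 1 else 0) =
      ∑ g : Fin m → Fin d → Bool, (∏ y, ∏ l, if g y l then q else 1 - q) *
        ((if #{y ∈ Iio i | ((List.finRange d).any fun l => !g y l) = true} = i' then 1 else 0) *
          if ((List.finRange d).filter fun l => !g i l)[(j' : ℕ)]? = some j then 1 else 0) :=
    Fintype.sum_equiv (Equiv.curry _ _ _) _ _ fun δ => by
      simp only [traceSource_eq_some_iff, Fintype.prod_prod_type, ite_zero_mul_ite_zero, one_mul]
      rfl
  rw [hcurry,
    sum_pi_prod_mul_ite_card_filter_mul (sum_pi_prod_weight q) (Iio i) notMem_Iio_self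
      (fun v => ((List.finRange d).any fun l => !v l) = true)
      (fun v => if ((List.finRange d).filter fun l => !v l)[(j' : ℕ)]? = some j then 1 else 0),
    Fin.card_Iio, sum_filter_any_prod_weight, sum_prod_weight_mul_ite_getElem?_filter,
    sub_sub_cancel]
end

theorem spider_trace_expected_label_general (n d : ℕ)
    (q : ℝ)
    (a : Fin (n / d) × Fin d → ℝ) (i' : Fin (n / d)) (j' : Fin d) :
    ∑ δ : Fin (n / d) × Fin d → Bool,
      (∏ p : Fin (n / d) × Fin d, (if δ p then q else 1 - q)) * spiderTrace a δ (i', j') =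
    (1 - q) * ∑ p ∈ Finset.univ.filter
        (fun p : Fin (n / d) × Fin d => (i' : ℕ) ≤ (p.1 : ℕ) ∧ (j' : ℕ) ≤ (p.2 : ℕ)),
      a p * (Nat.choose (p.1 : ℕ) (i' : ℕ) : ℝ) * (1 - q ^ d) ^ (i' : ℕ) *
        q ^ (d * ((p.1 : ℕ) - (i' : ℕ))) * (Nat.choose (p.2 : ℕ) (j' : ℕ) : ℝ) *
        (1 - q) ^ (j' : ℕ) * q ^ ((p.2 : ℕ) - (j' : ℕ)) := by
  have hvanish : ∀ p ∈ (univ : Finset (Fin (n / d) × Fin d)),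
      (1 - q) * (a p * ((p.1 : ℕ).choose i' : ℝ) * (1 - q ^ d) ^ (i' : ℕ) *
        q ^ (d * ((p.1 : ℕ) - i')) * ((p.2 : ℕ).choose j' : ℝ) * (1 - q) ^ (j' : ℕ) *
        q ^ ((p.2 : ℕ) - j')) ≠ 0 → (i' : ℕ) ≤ p.1 ∧ (j' : ℕ) ≤ p.2 := by
    intro p _ hp
    by_contra hlt
    rcases not_and_or.1 hlt with h | h <;> simp [Nat.choose_eq_zero_of_lt (not_le.1 h)] at hp
  calc _ = ∑ p, a p * ∑ δ : Fin (n / d) × Fin d → Bool, (∏ r, if δ r then q else 1 - q) *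
          (if traceSource δ (i', j') = some p then 1 else 0) := by
        simp only [spiderTrace_eq_elim_traceSource, Option.elim_zero_eq_sum, mul_sum]
        rw [sum_comm]
        refine sum_congr rfl fun p _ => sum_congr rfl fun δ _ => ?_
        split_ifs <;> ring
    _ = _ := by
        rw [mul_sum, sum_filter_of_ne hvanish]
        refine sum_congr rfl fun ⟨i, j⟩ _ => ?_
        rw [sum_prod_weight_mul_ite_traceSource, pow_mul]
        ring

/-- The expected label at position `(i',j')` of a trace of an `(n,d)`-spider through the
deletion channel with deletion probability `q` equals
`(1−q) · Σ_{i ≥ i', j ≥ j'} a_{i,j} · C(i,i')(1−q^d)^{i'} q^{d(i−i')} · C(j,j')(1−q)^{j'} q^{j−j'}`.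
The expectation is written out explicitly as a weighted sum over all deletion patterns. -/
theorem spider_trace_expected_label (n d : ℕ) (hn : 0 < n) (hd : 0 < d) (hdvd : d ∣ n)
    (q : ℝ) (hq0 : 0 < q) (hq1 : q < 1)
    (a : Fin (n / d) × Fin d → ℝ) (i' : Fin (n / d)) (j' : Fin d) :
    ∑ δ : Fin (n / d) × Fin d → Bool,
      (∏ p : Fin (n / d) × Fin d, (if δ p then q else 1 - q)) * spiderTrace a δ (i', j') =
    (1 - q) * ∑ p ∈ Finset.univ.filter
        (fun p : Fin (n / d) × Fin d => (i' : ℕ) ≤ (p.1 : ℕ) ∧ (j' : ℕ) ≤ (p.2 : ℕ)),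
      a p * (Nat.choose (p.1 : ℕ) (i' : ℕ) : ℝ) * (1 - q ^ d) ^ (i' : ℕ) *
        q ^ (d * ((p.1 : ℕ) - (i' : ℕ))) * (Nat.choose (p.2 : ℕ) (j' : ℕ) : ℝ) *
        (1 - q) ^ (j' : ℕ) * q ^ ((p.2 : ℕ) - (j' : ℕ)) :=
  spider_trace_expected_label_general n d q a i' j'
end

section
/- Let f(z₁,z₂) be a nonzero polynomial in two complex variables all of whose coefficients lie in {−1,0,1}, with degree at most a in z₁ and degree at most b in z₂, where a, b ≥ 1. Then for all positive integers L₁ and L₂, there exist real numbers θ₁, θ₂ with |θ₁| ≤ π/L₁ and |θ₂| ≤ π/L₂ such that |f(e^{iθ₁}, e^{iθ₂})| ≥ ((a+1)(b+1))^{−(L₁·L₂ − 1)}. -/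
/-!
Let `ω₁, ω₂` be primitive `L₁`-th and `L₂`-th roots of unity and put
`G(z₁, z₂) = ∏_{k < L₁, l < L₂} f(ω₁ᵏ z₁, ω₂ˡ z₂)`. Its lexicographically lowest coefficient is
the product of those of the rotated copies of `f`, each a nonzero coefficient of `f` times a
unimodular number, so it has modulus `1`. Averaging a polynomial of degree `< N` against the
`N`-th roots of unity recovers any of its coefficients, so some point of the torus has `|G| ≥ 1`.
Rotating that point by suitable powers of `ω₁, ω₂` brings it into the box `|θ₁| ≤ π / L₁`,
`|θ₂| ≤ π / L₂`; there one factor of `G` is `f` itself, while each of the other `L₁ L₂ - 1`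
factors is at most `(a + 1)(b + 1)`.
-/

open Polynomial Finset Complex
open scoped Real
open scoped Polynomial.Bivariate

lemma IsPrimitiveRoot.geom_sum_pow_mul_inv_pow {K : Type*} [Field K] {ζ : K} {N : ℕ}
    (hζ : IsPrimitiveRoot ζ N) {i m : ℕ} (hi : i < N) (hm : m < N) :
    ∑ p ∈ range N, (ζ ^ i * (ζ ^ m)⁻¹) ^ p = if i = m then (N : K) else 0 := by
  split_ifs with him
  · simp [him, pow_ne_zero m (hζ.ne_zero (by omega))]
  · have hw : ζ ^ i * (ζ ^ m)⁻¹ ≠ 1 := fun h =>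
      him (hζ.pow_inj hi hm (mul_inv_eq_one₀ (pow_ne_zero m (hζ.ne_zero (by omega))) |>.mp h))
    rw [geom_sum_eq hw, mul_pow, inv_pow, ← pow_mul, ← pow_mul, mul_comm i, mul_comm m,
      pow_mul, pow_mul, hζ.pow_eq_one]
    simp

lemma IsPrimitiveRoot.sum_eval_pow_mul_inv_pow {K : Type*} [Field K] {ζ : K} {N : ℕ}
    (hζ : IsPrimitiveRoot ζ N) {q : K[X]} (hq : q.natDegree < N) {m : ℕ} (hm : m < N) :
    ∑ p ∈ range N, q.eval (ζ ^ p) * (ζ ^ m)⁻¹ ^ p = N * q.coeff m := by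
  calc ∑ p ∈ range N, q.eval (ζ ^ p) * (ζ ^ m)⁻¹ ^ p
      = ∑ i ∈ range N, q.coeff i * ∑ p ∈ range N, (ζ ^ i * (ζ ^ m)⁻¹) ^ p := by
        simp only [eval_eq_sum_range' hq, sum_mul, mul_sum]
        rw [sum_comm]
        refine sum_congr rfl fun i _ => sum_congr rfl fun p _ => ?_
        ring
    _ = N * q.coeff m := by
        rw [sum_congr rfl fun i hi => by
          rw [hζ.geom_sum_pow_mul_inv_pow (mem_range.mp hi) hm]]
        simp [mem_range.mpr hm, mul_comm]

lemma IsPrimitiveRoot.exists_norm_coeff_le_norm_eval_pow {ζ : ℂ} {N : ℕ}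
    (hζ : IsPrimitiveRoot ζ N) {q : ℂ[X]} (hq : q.natDegree < N) (m : ℕ) :
    ∃ p ∈ range N, ‖q.coeff m‖ ≤ ‖q.eval (ζ ^ p)‖ := by
  have hN : (range N).Nonempty := nonempty_range_iff.mpr (by omega)
  by_cases hm : m < N
  swap
  · obtain ⟨p, hp⟩ := hN
    exact ⟨p, hp, by simp [coeff_eq_zero_of_natDegree_lt (hq.trans_le (not_lt.mp hm))]⟩
  have hunit : ‖(ζ ^ m)⁻¹‖ = 1 := by
    rw [norm_inv, norm_pow, hζ.norm'_eq_one (by omega), one_pow, inv_one]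
  refine exists_le_of_sum_le hN ?_
  calc ∑ _p ∈ range N, ‖q.coeff m‖
      = ‖∑ p ∈ range N, q.eval (ζ ^ p) * (ζ ^ m)⁻¹ ^ p‖ := by
        rw [hζ.sum_eval_pow_mul_inv_pow hq hm]
        simp
    _ ≤ ∑ p ∈ range N, ‖q.eval (ζ ^ p)‖ := by
        refine (norm_sum_le _ _).trans_eq (sum_congr rfl fun p _ => ?_)
        rw [norm_mul, norm_pow, hunit, one_pow, mul_one]

lemma Polynomial.exists_norm_coeff_le_norm_eval_exp (q : ℂ[X]) (m : ℕ) :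
    ∃ φ : ℝ, ‖q.coeff m‖ ≤ ‖q.eval (exp (φ * I))‖ := by
  set N := q.natDegree + 1
  obtain ⟨p, -, hp⟩ :=
    (isPrimitiveRoot_exp N q.natDegree.succ_ne_zero).exists_norm_coeff_le_norm_eval_pow (q := q)
      (Nat.lt_succ_self _) m
  refine ⟨2 * π * p / N, hp.trans_eq ?_⟩
  rw [← exp_nat_mul]
  push_cast
  ring_nf

lemma Polynomial.exists_norm_coeff_coeff_le_norm_evalEval_exp (g : ℂ[X][Y]) (i j : ℕ) :
    ∃ φ₁ φ₂ : ℝ, ‖(g.coeff i).coeff j‖ ≤ ‖g.evalEval (exp (φ₂ * I)) (exp (φ₁ * I))‖ := by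
  obtain ⟨φ₂, h₂⟩ := (g.coeff i).exists_norm_coeff_le_norm_eval_exp j
  obtain ⟨φ₁, h₁⟩ := (g.map (evalRingHom (exp (φ₂ * I)))).exists_norm_coeff_le_norm_eval_exp i
  rw [coeff_map, coe_evalRingHom, map_evalRingHom_eval] at h₁
  exact ⟨φ₁, φ₂, h₂.trans h₁⟩

lemma Polynomial.trailingCoeff_prod {R ι : Type*} [CommSemiring R] [NoZeroDivisors R]
    [Nontrivial R] (s : Finset ι) (f : ι → R[X]) :
    (∏ i ∈ s, f i).trailingCoeff = ∏ i ∈ s, (f i).trailingCoeff := by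
  classical
  induction s using Finset.induction_on with
  | empty => simp [trailingCoeff]
  | insert i s hi ih => rw [prod_insert hi, prod_insert hi, trailingCoeff_mul, ih]

lemma Polynomial.one_le_norm_trailingCoeff_trailingCoeff {R : Type*} [NormedRing R]
    {g : R[X][Y]} (hg : g ≠ 0)
    (h : ∀ i j, (g.coeff i).coeff j ≠ 0 → 1 ≤ ‖(g.coeff i).coeff j‖) :
    1 ≤ ‖g.trailingCoeff.trailingCoeff‖ :=
  h _ _ (mt trailingCoeff_eq_zero.mp (mt trailingCoeff_eq_zero.mp hg))

lemma exists_pow_mul_exp_eq_exp_of_abs_le {L : ℕ} (hL : 0 < L) (φ : ℝ) :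
    ∃ k < L, ∃ θ : ℝ, |θ| ≤ π / L ∧ exp (2 * π * I / L) ^ k * exp (φ * I) = exp (θ * I) := by
  have hL' : (L : ℂ) ≠ 0 := by exact_mod_cast hL.ne'
  have hp : 0 < 2 * π / L := by positivity
  set θ := toIocMod hp (-(π / L)) φ
  have hθ := toIocMod_mem_Ioc hp (-(π / L)) φ
  have hroot : (exp (θ * I) / exp (φ * I)) ^ L = 1 := by
    rw [← exp_sub, ← exp_nat_mul, ← sub_mul, ← ofReal_sub,
      ← neg_sub, self_sub_toIocMod, zsmul_eq_mul]
    convert exp_int_mul_two_pi_mul_I (-toIocDiv hp (-(π / L)) φ) using 2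
    push_cast
    field_simp
  have := NeZero.of_pos hL
  obtain ⟨k, hk, hωk⟩ := (isPrimitiveRoot_exp L hL.ne').eq_pow_of_pow_eq_one hroot
  refine ⟨k, hk, θ, abs_le.mpr ⟨hθ.1.le, hθ.2.trans_eq (by ring)⟩, ?_⟩
  rw [hωk, div_mul_cancel₀ _ (exp_ne_zero _)]

lemma inv_pow_card_sub_one_le_of_one_le_prod {ι : Type*} {s : Finset ι} {f : ι → ℝ} {M : ℝ}
    (hf : ∀ k ∈ s, 0 ≤ f k) (hfM : ∀ k ∈ s, f k ≤ M) (hprod : 1 ≤ ∏ k ∈ s, f k) {k₀ : ι}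
    (hk₀ : k₀ ∈ s) : (M ^ (#s - 1))⁻¹ ≤ f k₀ := by
  classical
  rcases (pow_nonneg ((hf k₀ hk₀).trans (hfM k₀ hk₀)) (#s - 1)).eq_or_lt with hM | hM
  · rw [← hM, inv_zero]
    exact hf k₀ hk₀
  rw [inv_le_iff_one_le_mul₀ hM, ← card_erase_of_mem hk₀]
  calc 1 ≤ f k₀ * ∏ k ∈ s.erase k₀, f k := (mul_prod_erase s f hk₀).symm ▸ hprod
    _ ≤ f k₀ * ∏ _k ∈ s.erase k₀, M :=
      mul_le_mul_of_nonneg_left (prod_le_prod (fun k hk => hf k (mem_of_mem_erase hk))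
        fun k hk => hfM k (mem_of_mem_erase hk)) (hf k₀ hk₀)
    _ = f k₀ * M ^ #(s.erase k₀) := by rw [prod_const]

noncomputable def bivariatePoly {R : Type*} [Semiring R] (a b : ℕ) (c : ℕ → ℕ → R) : R[X][Y] :=
  ∑ i ∈ range (a + 1), ∑ j ∈ range (b + 1), monomial i (monomial j (c i j))

section bivariatePoly

variable {R : Type*} (a b : ℕ)

lemma coeff_coeff_bivariatePoly [Semiring R] (c : ℕ → ℕ → R) (i j : ℕ) :
    ((bivariatePoly a b c).coeff i).coeff j = if i ≤ a ∧ j ≤ b then c i j else 0 := by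
  simp only [bivariatePoly, finsetSum_coeff, coeff_monomial, apply_ite (coeff · j), coeff_zero]
  simp [sum_ite_eq', ite_and]

lemma evalEval_bivariatePoly [CommSemiring R] (c : ℕ → ℕ → R) (x y : R) :
    (bivariatePoly a b c).evalEval y x =
      ∑ i ∈ range (a + 1), ∑ j ∈ range (b + 1), c i j * x ^ i * y ^ j := by
  simp only [bivariatePoly, evalEval_finsetSum, evalEval, eval_monomial, eval_C, eval_mul, eval_pow]
  exact sum_congr rfl fun i _ => sum_congr rfl fun j _ => mul_right_comm _ _ _

lemma one_le_norm_trailingCoeff_trailingCoeff_bivariatePoly [NormedRing R] {c : ℕ → ℕ → R}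
    (hc : ∀ i j, c i j ≠ 0 → 1 ≤ ‖c i j‖) (hne : ∃ i ≤ a, ∃ j ≤ b, c i j ≠ 0) :
    1 ≤ ‖(bivariatePoly a b c).trailingCoeff.trailingCoeff‖ := by
  have hcoeff := coeff_coeff_bivariatePoly a b c
  refine one_le_norm_trailingCoeff_trailingCoeff (fun h0 => ?_) fun i j hij => ?_
  · obtain ⟨i, hi, j, hj, hij⟩ := hne
    have h := hcoeff i j
    rw [h0, if_pos ⟨hi, hj⟩, coeff_zero, coeff_zero] at h
    exact hij h.symm
  · rw [hcoeff] at hij ⊢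
    split_ifs at hij ⊢
    exacts [hc i j hij, absurd rfl hij]

end bivariatePoly

lemma norm_sum_sum_mul_pow_mul_pow_le {a b : ℕ} {c : ℕ → ℕ → ℂ} (hc : ∀ i j, ‖c i j‖ ≤ 1)
    {x y : ℂ} (hx : ‖x‖ ≤ 1) (hy : ‖y‖ ≤ 1) :
    ‖∑ i ∈ range (a + 1), ∑ j ∈ range (b + 1), c i j * x ^ i * y ^ j‖ ≤
      ((a : ℝ) + 1) * ((b : ℝ) + 1) := by
  have hterm : ∀ i j, ‖c i j * x ^ i * y ^ j‖ ≤ 1 := fun i j => by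
    rw [norm_mul, norm_mul, norm_pow, norm_pow]
    exact mul_le_one₀ (mul_le_one₀ (hc i j) (by positivity) (pow_le_one₀ (norm_nonneg _) hx))
      (by positivity) (pow_le_one₀ (norm_nonneg _) hy)
  calc ‖∑ i ∈ range (a + 1), ∑ j ∈ range (b + 1), c i j * x ^ i * y ^ j‖
      ≤ ∑ i ∈ range (a + 1), ∑ j ∈ range (b + 1), ‖c i j * x ^ i * y ^ j‖ :=
        (norm_sum_le _ _).trans (sum_le_sum fun i _ => norm_sum_le _ _)
    _ ≤ ∑ i ∈ range (a + 1), ∑ j ∈ range (b + 1), (1 : ℝ) :=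
        sum_le_sum fun i _ => sum_le_sum fun j _ => hterm i j
    _ = ((a : ℝ) + 1) * ((b : ℝ) + 1) := by
        simp only [sum_const, card_range, nsmul_eq_mul, Nat.cast_add, Nat.cast_one, mul_one,
          smul_add]
        ring

lemma exists_one_le_prod_norm_rotated {ι : Type*} (s : Finset ι) {u v : ι → ℂ}
    (hu : ∀ k, ‖u k‖ = 1) (hv : ∀ k, ‖v k‖ = 1) {a b : ℕ} {c : ℕ → ℕ → ℂ}
    (hc : ∀ i j, c i j ≠ 0 → 1 ≤ ‖c i j‖) (hne : ∃ i ≤ a, ∃ j ≤ b, c i j ≠ 0) :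
    ∃ φ₁ φ₂ : ℝ, 1 ≤ ∏ k ∈ s, ‖∑ i ∈ range (a + 1), ∑ j ∈ range (b + 1),
      c i j * (u k * exp (φ₁ * I)) ^ i * (v k * exp (φ₂ * I)) ^ j‖ := by
  set g := ∏ k ∈ s, bivariatePoly a b fun i j => c i j * u k ^ i * v k ^ j
  have hg : 1 ≤ ‖g.trailingCoeff.trailingCoeff‖ := by
    rw [trailingCoeff_prod, trailingCoeff_prod, norm_prod]
    refine one_le_prod fun k _ => one_le_norm_trailingCoeff_trailingCoeff_bivariatePoly a b
      (fun i j hij => ?_) ?_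
    · simpa [hu, hv] using hc i j (left_ne_zero_of_mul (left_ne_zero_of_mul hij))
    · obtain ⟨i, hi, j, hj, hij⟩ := hne
      exact ⟨i, hi, j, hj, by simp [hij, ← norm_ne_zero_iff, hu, hv]⟩
  obtain ⟨φ₁, φ₂, h⟩ := g.exists_norm_coeff_coeff_le_norm_evalEval_exp g.natTrailingDegree
    g.trailingCoeff.natTrailingDegree
  refine ⟨φ₁, φ₂, hg.trans (h.trans_eq ?_)⟩
  simp only [g, evalEval_prod, norm_prod, evalEval_bivariatePoly, mul_pow]
  congr! 4 with k _ i _ j _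
  ring

theorem bivariate_littlewood_general (a b : ℕ)
    (c : ℕ → ℕ → ℂ)
    (hcoef : ∀ i j, c i j = -1 ∨ c i j = 0 ∨ c i j = 1)
    (hne : ∃ i ≤ a, ∃ j ≤ b, c i j ≠ 0)
    (L₁ L₂ : ℕ) (hL₁ : 0 < L₁) (hL₂ : 0 < L₂) :
    ∃ θ₁ θ₂ : ℝ, |θ₁| ≤ Real.pi / L₁ ∧ |θ₂| ≤ Real.pi / L₂ ∧
      ((((a : ℝ) + 1) * ((b : ℝ) + 1)) ^ (L₁ * L₂ - 1))⁻¹ ≤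
        ‖∑ i ∈ Finset.range (a + 1), ∑ j ∈ Finset.range (b + 1),
          c i j * Complex.exp (θ₁ * Complex.I) ^ i * Complex.exp (θ₂ * Complex.I) ^ j‖ := by
  have hc : ∀ i j, ‖c i j‖ = if c i j = 0 then 0 else 1 := fun i j => by
    rcases hcoef i j with h | h | h <;> simp [h]
  have hω {L : ℕ} (hL : 0 < L) (k : ℕ) : ‖exp (2 * π * I / L) ^ k‖ = 1 := by
    rw [norm_pow, (isPrimitiveRoot_exp L hL.ne').norm'_eq_one hL.ne', one_pow]
  obtain ⟨φ₁, φ₂, hprod⟩ := exists_one_le_prod_norm_rotated (range L₁ ×ˢ range L₂)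
    (u := fun kl => exp (2 * π * I / L₁) ^ kl.1) (v := fun kl => exp (2 * π * I / L₂) ^ kl.2)
    (fun kl => hω hL₁ kl.1) (fun kl => hω hL₂ kl.2) (fun i j h => by simp [hc, h]) hne
  obtain ⟨k, hk, θ₁, hθ₁, hk_eq⟩ := exists_pow_mul_exp_eq_exp_of_abs_le hL₁ φ₁
  obtain ⟨l, hl, θ₂, hθ₂, hl_eq⟩ := exists_pow_mul_exp_eq_exp_of_abs_le hL₂ φ₂
  refine ⟨θ₁, θ₂, hθ₁, hθ₂, ?_⟩
  have h := inv_pow_card_sub_one_le_of_one_le_prod (fun _ _ => norm_nonneg _)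
    (fun kl _ => norm_sum_sum_mul_pow_mul_pow_le (fun i j => by rw [hc]; split_ifs <;> norm_num)
      (by rw [norm_mul, hω hL₁, norm_exp_ofReal_mul_I, one_mul])
      (by rw [norm_mul, hω hL₂, norm_exp_ofReal_mul_I, one_mul])) hprod
    (k₀ := (k, l)) (mem_product.mpr ⟨mem_range.mpr hk, mem_range.mpr hl⟩)
  rwa [card_product, card_range, card_range, hk_eq, hl_eq] at h

/-- Bivariate Littlewood lemma: if `f(z₁,z₂) = Σ_{i ≤ a, j ≤ b} c i j · z₁^i z₂^j` is a
nonzero polynomial with all coefficients in `{−1,0,1}` (`a, b ≥ 1`), then for all positive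
integers `L₁, L₂` there are angles `θ₁, θ₂` with `|θ₁| ≤ π/L₁`, `|θ₂| ≤ π/L₂` and
`|f(e^{iθ₁}, e^{iθ₂})| ≥ ((a+1)(b+1))^{−(L₁L₂−1)}`. -/
theorem bivariate_littlewood (a b : ℕ) (ha : 1 ≤ a) (hb : 1 ≤ b)
    (c : ℕ → ℕ → ℂ)
    (hcoef : ∀ i j, c i j = -1 ∨ c i j = 0 ∨ c i j = 1)
    (hne : ∃ i ≤ a, ∃ j ≤ b, c i j ≠ 0)
    (L₁ L₂ : ℕ) (hL₁ : 0 < L₁) (hL₂ : 0 < L₂) :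
    ∃ θ₁ θ₂ : ℝ, |θ₁| ≤ Real.pi / L₁ ∧ |θ₂| ≤ Real.pi / L₂ ∧
      ((((a : ℝ) + 1) * ((b : ℝ) + 1)) ^ (L₁ * L₂ - 1))⁻¹ ≤
        ‖∑ i ∈ Finset.range (a + 1), ∑ j ∈ Finset.range (b + 1),
          c i j * Complex.exp (θ₁ * Complex.I) ^ i * Complex.exp (θ₂ * Complex.I) ^ j‖ :=
  bivariate_littlewood_general a b c hcoef hne L₁ L₂ hL₁ hL₂
end

section
/- Let f₁, …, f_m be nonzero polynomials in two complex variables, each with all coefficients in {−1,0,1}. Then there exist complex numbers z₁, z₂ with |z₁| = |z₂| = 1 such that |f₁(z₁,z₂) · f₂(z₁,z₂) ⋯ f_m(z₁,z₂)| ≥ 1. -/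
/-!
The product `F = f₁ ⋯ f_m` is a nonzero polynomial with integer coefficients, so some coefficient
has absolute value at least `1`. Every coefficient of a polynomial on `ℂⁿ` is bounded by the sup
norm of the polynomial on the unit torus: if `N` exceeds all exponents, the coefficient `c_s` is
the average over the characters `ψ` of `(ℤ/N)ⁿ` of `ψ(-s) F(zψ)`, where `zψ` is the torus point
`(ψ(e₁), …, ψ(eₙ))`, by orthogonality of characters.
-/

open Finset MvPolynomial

lemma AddChar.map_sum_eq_prod {ι A M : Type*} [AddCommMonoid A] [CommMonoid M] (ψ : AddChar A M)
    (s : Finset ι) (a : ι → A) : ψ (∑ i ∈ s, a i) = ∏ i ∈ s, ψ (a i) := by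
  classical
  induction s using Finset.induction_on with
  | empty => simp
  | insert i s hi ih => rw [sum_insert hi, prod_insert hi, map_add_eq_mul, ih]

section CharacterSums

variable {σ : Type*} {N : ℕ}

lemma Finsupp.eq_of_natCast_zmod_eq {t s : σ →₀ ℕ} (ht : ∀ i, t i < N) (hs : ∀ i, s i < N)
    (h : (fun i => (t i : ZMod N)) = fun i => (s i : ZMod N)) : t = s := by
  ext i
  have := congrFun h i
  rwa [ZMod.natCast_eq_natCast_iff', Nat.mod_eq_of_lt (ht i), Nat.mod_eq_of_lt (hs i)] at this

variable [Fintype σ] [DecidableEq σ]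

lemma MvPolynomial.eval_addChar_single (ψ : AddChar (σ → ZMod N) ℂ) (F : MvPolynomial σ ℂ) :
    eval (fun i => ψ (Pi.single i 1)) F
      = ∑ t ∈ F.support, F.coeff t * ψ (fun i => (t i : ZMod N)) := by
  rw [eval_eq']
  refine sum_congr rfl fun t _ => ?_
  have hcast : (fun i => (t i : ZMod N)) = ∑ i, t i • Pi.single i (1 : ZMod N) := by
    simp only [← Pi.single_smul, nsmul_one, univ_sum_single]
  simp only [hcast, ψ.map_sum_eq_prod, AddChar.map_nsmul_eq_pow]

variable [NeZero N]

lemma MvPolynomial.sum_addChar_mul_eval (F : MvPolynomial σ ℂ) (s : σ →₀ ℕ)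
    (hF : ∀ t ∈ F.support, ∀ i, t i < N) (hs : ∀ i, s i < N) :
    ∑ ψ : AddChar (σ → ZMod N) ℂ,
        ψ (-fun i => (s i : ZMod N)) * eval (fun i => ψ (Pi.single i 1)) F
      = Fintype.card (σ → ZMod N) * F.coeff s := by
  have orthogonality : ∀ t, ∑ ψ : AddChar (σ → ZMod N) ℂ,
      ψ (-fun i => (s i : ZMod N)) * (F.coeff t * ψ (fun i => (t i : ZMod N)))
      = F.coeff t * if (fun i => (t i : ZMod N)) = fun i => (s i : ZMod N)
          then (Fintype.card (σ → ZMod N) : ℂ) else 0 := by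
    intro t
    simp_rw [mul_left_comm _ (F.coeff t), ← AddChar.map_add_eq_mul, ← mul_sum, neg_add_eq_sub,
      AddChar.sum_apply_eq_ite, sub_eq_zero]
  simp_rw [eval_addChar_single, mul_sum]
  rw [sum_comm]
  simp_rw [orthogonality]
  rw [sum_eq_single s]
  · simp [mul_comm]
  · intro t ht hts
    rw [if_neg fun h => hts (Finsupp.eq_of_natCast_zmod_eq (hF t ht) hs h), mul_zero]
  · intro hs'
    rw [notMem_support_iff.1 hs', zero_mul]

end CharacterSums

theorem MvPolynomial.exists_norm_coeff_le_norm_eval {σ : Type*} [Fintype σ]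
    (F : MvPolynomial σ ℂ) (s : σ →₀ ℕ) :
    ∃ z : σ → ℂ, (∀ i, ‖z i‖ = 1) ∧ ‖F.coeff s‖ ≤ ‖eval z F‖ := by
  classical
  set N := F.totalDegree + s.degree + 1
  have hF : ∀ t ∈ F.support, ∀ i, t i < N := fun t ht i => by
    have := (t.le_degree i).trans (le_totalDegree ht)
    omega
  have hs : ∀ i, s i < N := fun i => by have := s.le_degree i; omega
  have hsum : ∑ _ψ : AddChar (σ → ZMod N) ℂ, ‖F.coeff s‖
      ≤ ∑ ψ : AddChar (σ → ZMod N) ℂ, ‖eval (fun i => ψ (Pi.single i 1)) F‖ := calc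
    _ = ‖(Fintype.card (σ → ZMod N) : ℂ) * F.coeff s‖ := by simp
    _ = ‖∑ ψ : AddChar (σ → ZMod N) ℂ,
          ψ (-fun i => (s i : ZMod N)) * eval (fun i => ψ (Pi.single i 1)) F‖ := by
      rw [sum_addChar_mul_eval F s hF hs]
    _ ≤ _ := (norm_sum_le _ _).trans_eq (by simp [AddChar.norm_apply])
  obtain ⟨ψ, -, hψ⟩ := exists_le_of_sum_le univ_nonempty hsum
  exact ⟨fun i => ψ (Pi.single i 1), fun i => ψ.norm_apply _, hψ⟩

lemma MvPolynomial.mem_range_map_intCast {σ : Type*} {p : MvPolynomial σ ℂ}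
    (h : ∀ s, ∃ n : ℤ, p.coeff s = n) : p ∈ (map (Int.castRingHom ℂ)).range := by
  rw [RingHom.mem_range, ← Set.mem_range, mem_range_map_iff_coeffs_subset]
  rintro _ hc
  obtain ⟨s, -, rfl⟩ := mem_coeffs_iff.1 hc
  obtain ⟨n, hn⟩ := h s
  exact ⟨n, hn.symm⟩

lemma MvPolynomial.exists_one_le_norm_coeff {σ : Type*} {p : MvPolynomial σ ℂ}
    (hp : p ∈ (map (Int.castRingHom ℂ)).range) (h0 : p ≠ 0) : ∃ s, 1 ≤ ‖p.coeff s‖ := by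
  obtain ⟨q, rfl⟩ := hp
  have hq : q ≠ 0 := by
    rintro rfl
    exact h0 (map_zero _)
  obtain ⟨s, hs⟩ := ne_zero_iff.1 hq
  refine ⟨s, ?_⟩
  rw [coeff_map, eq_intCast, Complex.norm_intCast]
  exact_mod_cast Int.one_le_abs hs

/-- If `f₁, …, f_m` are nonzero bivariate Littlewood polynomials (all coefficients in
`{−1,0,1}`), then there are points `z₁, z₂` on the unit circle with
`|f₁(z₁,z₂) · f₂(z₁,z₂) ⋯ f_m(z₁,z₂)| ≥ 1`. -/
theorem littlewood_product_ge_one (m : ℕ) (f : Fin m → MvPolynomial (Fin 2) ℂ)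
    (hne : ∀ k, f k ≠ 0)
    (hcoef : ∀ k s, (f k).coeff s = -1 ∨ (f k).coeff s = 0 ∨ (f k).coeff s = 1) :
    ∃ z₁ z₂ : ℂ, ‖z₁‖ = 1 ∧ ‖z₂‖ = 1 ∧
      1 ≤ ‖∏ k : Fin m, MvPolynomial.eval ![z₁, z₂] (f k)‖ := by
  have hint : ∏ k, f k ∈ (map (Int.castRingHom ℂ)).range :=
    prod_mem fun k _ => mem_range_map_intCast fun s => by
      rcases hcoef k s with h | h | h
      exacts [⟨-1, by simp [h]⟩, ⟨0, by simp [h]⟩, ⟨1, by simp [h]⟩]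
  obtain ⟨s, hs⟩ := exists_one_le_norm_coeff hint (prod_ne_zero_iff.2 fun k _ => hne k)
  obtain ⟨z, hz, hle⟩ := exists_norm_coeff_le_norm_eval (∏ k, f k) s
  refine ⟨z 0, z 1, hz 0, hz 1, ?_⟩
  have hz_eta : ![z 0, z 1] = z := FinVec.etaExpand_eq z
  rw [hz_eta, ← map_prod]
  exact hs.trans hle
end

section
/- For every real number r with 0 ≤ r < 1 and every real number θ, the inequality |e^{iθ} − r| ≤ (1 − r) · exp( r·θ² / (2·(1−r)²) ) holds, where |·| denotes the modulus in ℂ and e^{iθ} = cos θ + i·sin θ. -/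
/-!
Expanding the square, `|e^{iθ} − r|² = (1 − r)² + 2r(1 − cos θ) ≤ (1 − r)² + rθ²`, and
`a² + b ≤ a² e^{b/a²} = (a e^{b/(2a²)})²` by `1 + x ≤ eˣ`; take square roots with `a = 1 − r`.
-/

open Real

theorem Complex.norm_exp_ofReal_mul_I_sub_ofReal_sq (r θ : ℝ) :
    ‖Complex.exp (θ * Complex.I) - (r : ℂ)‖ ^ 2 = (1 - r) ^ 2 + 2 * r * (1 - Real.cos θ) := by
  rw [Complex.sq_norm, Complex.normSq_apply]
  simp only [Complex.sub_re, Complex.sub_im, Complex.exp_ofReal_mul_I_re,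
    Complex.exp_ofReal_mul_I_im, Complex.ofReal_re, Complex.ofReal_im, sub_zero]
  linear_combination Real.sin_sq_add_cos_sq θ

theorem Complex.norm_exp_ofReal_mul_I_sub_ofReal_sq_le {r : ℝ} (hr : 0 ≤ r) (θ : ℝ) :
    ‖Complex.exp (θ * Complex.I) - (r : ℂ)‖ ^ 2 ≤ (1 - r) ^ 2 + r * θ ^ 2 := by
  rw [Complex.norm_exp_ofReal_mul_I_sub_ofReal_sq]
  nlinarith [one_sub_sq_div_two_le_cos (x := θ)]

theorem Real.sq_add_le_sq_mul_exp {a : ℝ} (ha : a ≠ 0) (b : ℝ) :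
    a ^ 2 + b ≤ (a * exp (b / (2 * a ^ 2))) ^ 2 := by
  have ha2 : a ^ 2 ≠ 0 := pow_ne_zero 2 ha
  calc a ^ 2 + b = a ^ 2 * (b / a ^ 2 + 1) := by field_simp; ring
    _ ≤ a ^ 2 * exp (b / a ^ 2) := by gcongr; exact add_one_le_exp _
    _ = (a * exp (b / (2 * a ^ 2))) ^ 2 := by
      rw [mul_pow, ← exp_nat_mul]; congr 2; field_simp; norm_num

/-- For every real `r` with `0 ≤ r < 1` and every real `θ`,
`|e^{iθ} − r| ≤ (1 − r) · exp(r·θ² / (2·(1−r)²))`. -/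
theorem abs_exp_I_sub_le (r θ : ℝ) (hr0 : 0 ≤ r) (hr1 : r < 1) :
    ‖Complex.exp (θ * Complex.I) - (r : ℂ)‖ ≤
      (1 - r) * Real.exp (r * θ ^ 2 / (2 * (1 - r) ^ 2)) := by
  have h1r : 0 < 1 - r := sub_pos.mpr hr1
  refine le_of_sq_le_sq ?_ (by positivity)
  calc ‖Complex.exp (θ * Complex.I) - (r : ℂ)‖ ^ 2 ≤ (1 - r) ^ 2 + r * θ ^ 2 :=
        Complex.norm_exp_ofReal_mul_I_sub_ofReal_sq_le hr0 θ
    _ ≤ _ := sq_add_le_sq_mul_exp h1r.ne' _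
end
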